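/- (Theorem 6) Let (Ω, 𝓕, P) be a probability space, let B : ℝ → ℝ and θ ∈ ℝ with B(θ) > 0, and let G : ℝ → ℝ be a left inverse of B (G(B(θ)) = θ) that is continuous at B(θ). Let (Tₘ)_{m≥1} be a sequence of random variables on Ω with Tₘ ~ Gamma(shape m, rate B(θ)) for each m. Then the maximum likelihood estimator based on m lower record values, θ̂ₘ = G(m/Tₘ), converges in probability to θ as m → ∞. -/

import Mathlib

open MeasureTheory ProbabilityTheory Filter

/-! `Tₘ / m` has mean `1 / B θ` and variance `1 / (m (B θ)²)`, so by Chebyshev's inequality it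
converges in probability to `1 / B θ`. The estimator is `G` applied to the reciprocal of `Tₘ / m`,
and convergence in probability to a constant is preserved by maps continuous at that constant.
The Gamma moments follow from `x f_{a,r}(x) = (a / r) f_{a+1,r}(x)` for the Gamma densities. -/

open Real Topology

namespace ProbabilityTheory

section GammaMoments

variable {a r : ℝ}

lemma mul_gammaPDFReal (ha : 0 < a) (hr : 0 < r) (x : ℝ) :
    x * gammaPDFReal a r x = a / r * gammaPDFReal (a + 1) r x := by
  rcases lt_or_ge x 0 with hx | hx
  · simp [gammaPDFReal, not_le.mpr hx]
  have hxa : x ^ a = x ^ (a - 1) * x := by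
    simpa using rpow_add_one' hx (show a - 1 + 1 ≠ 0 by linarith)
  simp only [gammaPDFReal, if_pos hx, add_sub_cancel_right, hxa,
    rpow_add_one hr.ne', Gamma_add_one ha.ne']
  field_simp

lemma integral_gammaMeasure (ha : 0 < a) (hr : 0 < r) (f : ℝ → ℝ) :
    ∫ x, f x ∂gammaMeasure a r = ∫ x, gammaPDFReal a r x * f x := by
  rw [gammaMeasure, integral_withDensity_eq_integral_toReal_smul (f := gammaPDF a r)
    (measurable_gammaPDFReal a r).ennreal_ofReal (ae_of_all _ fun _ => ENNReal.ofReal_lt_top)]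
  simp [gammaPDF, ENNReal.toReal_ofReal (gammaPDFReal_nonneg ha hr _)]

lemma integrable_gammaMeasure_iff (ha : 0 < a) (hr : 0 < r) {f : ℝ → ℝ} :
    Integrable f (gammaMeasure a r) ↔ Integrable (fun x => gammaPDFReal a r x * f x) := by
  rw [gammaMeasure, integrable_withDensity_iff_integrable_smul' (f := gammaPDF a r)
    (measurable_gammaPDFReal a r).ennreal_ofReal (ae_of_all _ fun _ => ENNReal.ofReal_lt_top)]
  simp [gammaPDF, ENNReal.toReal_ofReal (gammaPDFReal_nonneg ha hr _)]

lemma gammaPDFReal_mul_pow_succ (ha : 0 < a) (hr : 0 < r) (n : ℕ) (x : ℝ) :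
    gammaPDFReal a r x * x ^ (n + 1) = a / r * (gammaPDFReal (a + 1) r x * x ^ n) := by
  rw [pow_succ]
  linear_combination x ^ n * mul_gammaPDFReal ha hr x

lemma integrable_pow_gammaMeasure (n : ℕ) (ha : 0 < a) (hr : 0 < r) :
    Integrable (fun x => x ^ n) (gammaMeasure a r) := by
  induction n generalizing a with
  | zero =>
    have := isProbabilityMeasure_gammaMeasure ha hr
    simp
  | succ n ih =>
    rw [integrable_gammaMeasure_iff ha hr]
    simp_rw [gammaPDFReal_mul_pow_succ ha hr]
    exact ((integrable_gammaMeasure_iff (by linarith) hr).mp (ih (by linarith))).const_mul _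

lemma integral_pow_gammaMeasure (n : ℕ) (ha : 0 < a) (hr : 0 < r) :
    ∫ x, x ^ n ∂gammaMeasure a r = (ascPochhammer ℝ n).eval a / r ^ n := by
  induction n generalizing a with
  | zero =>
    have := isProbabilityMeasure_gammaMeasure ha hr
    simp
  | succ n ih =>
    rw [integral_gammaMeasure ha hr]
    simp_rw [gammaPDFReal_mul_pow_succ ha hr]
    rw [integral_const_mul, ← integral_gammaMeasure (by linarith) hr, ih (by linarith),
      ascPochhammer_succ_left]
    simp only [Polynomial.eval_mul, Polynomial.eval_X, Polynomial.eval_comp, Polynomial.eval_add,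
      Polynomial.eval_one]
    field_simp
    ring

lemma memLp_id_gammaMeasure (ha : 0 < a) (hr : 0 < r) : MemLp id 2 (gammaMeasure a r) :=
  (memLp_two_iff_integrable_sq aestronglyMeasurable_id).mpr (integrable_pow_gammaMeasure 2 ha hr)

lemma integral_id_gammaMeasure (ha : 0 < a) (hr : 0 < r) :
    ∫ x, id x ∂gammaMeasure a r = a / r := by
  simpa using integral_pow_gammaMeasure 1 ha hr

lemma variance_id_gammaMeasure (ha : 0 < a) (hr : 0 < r) :
    Var[id; gammaMeasure a r] = a / r ^ 2 := by
  have := isProbabilityMeasure_gammaMeasure ha hr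
  rw [variance_eq_sub (memLp_id_gammaMeasure ha hr), integral_id_gammaMeasure ha hr]
  simp only [id_eq, Pi.pow_apply]
  rw [integral_pow_gammaMeasure 2 ha hr]
  simp only [ascPochhammer_succ_eval, ascPochhammer_one, Polynomial.eval_X, Nat.cast_one]
  field_simp
  ring

end GammaMoments

section ConvergenceInMeasure

variable {α ι E F : Type*} {mα : MeasurableSpace α} {μ : Measure α} {l : Filter ι}

lemma _root_.MeasureTheory.TendstoInMeasure.comp_continuousAt [PseudoMetricSpace E]
    [PseudoMetricSpace F] {Y : ι → α → E} {y : E} {g : E → F}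
    (hY : TendstoInMeasure μ Y l fun _ => y) (hg : ContinuousAt g y) :
    TendstoInMeasure μ (fun i ω => g (Y i ω)) l fun _ => g y := by
  rw [tendstoInMeasure_iff_dist] at hY ⊢
  intro ε hε
  obtain ⟨δ, hδ, hgδ⟩ := Metric.continuousAt_iff.mp hg ε hε
  refine tendsto_of_tendsto_of_tendsto_of_le_of_le tendsto_const_nhds (hY δ hδ)
    (fun _ => zero_le) fun i => measure_mono fun ω hω => ?_
  exact not_lt.mp fun h => (hgδ h).not_ge hω

lemma tendstoInMeasure_of_tendsto_variance [IsFiniteMeasure μ] {X : ι → α → ℝ} {c : ℝ}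
    (hX : ∀ᶠ i in l, MemLp (X i) 2 μ) (hmean : ∀ᶠ i in l, μ[X i] = c)
    (hvar : Tendsto (fun i => Var[X i; μ]) l (𝓝 0)) :
    TendstoInMeasure μ X l fun _ => c := by
  rw [tendstoInMeasure_iff_dist]
  intro ε hε
  have hbound : Tendsto (fun i => ENNReal.ofReal (Var[X i; μ] / ε ^ 2)) l (𝓝 0) := by
    simpa using ENNReal.tendsto_ofReal (hvar.div_const (ε ^ 2))
  refine tendsto_of_tendsto_of_tendsto_of_le_of_le' tendsto_const_nhds hbound
    (.of_forall fun _ => zero_le) ?_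
  filter_upwards [hX, hmean] with i hXi hmeani
  simpa only [Real.dist_eq, hmeani] using meas_ge_le_variance_div_sq hXi hε

end ConvergenceInMeasure

lemma identDistrib_id_of_map_eq_gammaMeasure {Ω : Type*} [MeasurableSpace Ω] {P : Measure Ω}
    {X : Ω → ℝ} {a r : ℝ} (ha : 0 < a) (hr : 0 < r) (hX : P.map X = gammaMeasure a r) :
    IdentDistrib X id P (gammaMeasure a r) := by
  have := isProbabilityMeasure_gammaMeasure ha hr
  refine ⟨aemeasurable_of_map_neZero (by rw [hX]; infer_instance), aemeasurable_id, ?_⟩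
  rw [hX, Measure.map_id]

lemma tendstoInMeasure_div_self_of_map_eq_gammaMeasure {Ω : Type*} [MeasurableSpace Ω]
    {P : Measure Ω} [IsFiniteMeasure P] {T : ℕ → Ω → ℝ} {r : ℝ} (hr : 0 < r)
    (hT : ∀ m : ℕ, 1 ≤ m → P.map (T m) = gammaMeasure m r) :
    TendstoInMeasure P (fun m ω => T m ω / m) atTop fun _ => r⁻¹ := by
  have hdist : ∀ᶠ m : ℕ in atTop, IdentDistrib (T m) id P (gammaMeasure m r) := by
    filter_upwards [eventually_ge_atTop 1] with m hm
    exact identDistrib_id_of_map_eq_gammaMeasure (by positivity) hr (hT m hm)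
  simp_rw [div_eq_mul_inv]
  refine tendstoInMeasure_of_tendsto_variance ?_ ?_ ?_
  · filter_upwards [hdist, eventually_ge_atTop 1] with m hTm hm
    exact (hTm.memLp_iff.mpr (memLp_id_gammaMeasure (by positivity) hr)).mul_const _
  · filter_upwards [hdist, eventually_ge_atTop 1] with m hTm hm
    rw [integral_mul_const, hTm.integral_eq, integral_id_gammaMeasure (by positivity) hr]
    field_simp
  · have hvar : ∀ᶠ m : ℕ in atTop, Var[fun ω => T m ω * (m : ℝ)⁻¹; P] = r⁻¹ ^ 2 * (m : ℝ)⁻¹ := by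
      filter_upwards [hdist, eventually_ge_atTop 1] with m hTm hm
      rw [variance_mul_const, hTm.variance_eq, variance_id_gammaMeasure (by positivity) hr]
      field_simp
    rw [← mul_zero (r⁻¹ ^ 2)]
    exact (tendsto_inv_atTop_nhds_zero_nat.const_mul _).congr' (hvar.mono fun _ h => h.symm)

end ProbabilityTheory

/-- Theorem 6: if `G` is a left inverse of `B` continuous at `B θ > 0`, and
`Tₘ ~ Gamma(shape m, rate B θ)` for each `m ≥ 1`, then the MLE based on `m` lower record
values, `θ̂ₘ = G(m / Tₘ)`, converges to `θ` in probability. -/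
theorem parameter_mle_consistent {Ω : Type*} [MeasurableSpace Ω]
    (P : Measure Ω) [IsProbabilityMeasure P] (B : ℝ → ℝ) (θ : ℝ) (hB : 0 < B θ)
    (G : ℝ → ℝ) (hG : G (B θ) = θ) (hGcont : ContinuousAt G (B θ))
    (T : ℕ → Ω → ℝ)
    (hT : ∀ m : ℕ, 1 ≤ m → Measure.map (T m) P = gammaMeasure (m : ℝ) (B θ)) :
    ∀ ε : ℝ, 0 < ε →
      Tendsto (fun m : ℕ => P {ω | ε < |G ((m : ℝ) / T m ω) - θ|}) atTop (nhds 0) := by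
  intro ε hε
  have hcont : ContinuousAt (fun x => G x⁻¹) (B θ)⁻¹ :=
    ContinuousAt.comp (by rwa [inv_inv]) (continuousAt_inv₀ (inv_ne_zero hB.ne'))
  have hconv := (tendstoInMeasure_div_self_of_map_eq_gammaMeasure hB hT).comp_continuousAt hcont
  rw [tendstoInMeasure_iff_dist] at hconv
  refine tendsto_of_tendsto_of_tendsto_of_le_of_le tendsto_const_nhds (hconv ε hε)
    (fun _ => zero_le) fun m => measure_mono fun ω hω => ?_
  simp only [Set.mem_ofPred_eq, inv_div, inv_inv, hG, Real.dist_eq] at hω ⊢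
  exact hω.le
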